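/- arXiv:1610.08377 — 6 statements merged into one kernel-verified Lean document; each statement's English description precedes it below -/
import Mathlib

section
/- Let K be a field of characteristic p > 0 and let G be a finitely generated subgroup of K^* × K^* of rank r (i.e. dim_ℚ(G ⊗_ℤ ℚ) = r). Then the equation x + y = 1 has at most p^r solutions (x, y) ∈ G satisfying x ∉ K^p and y ∉ K^p, where K^p := {z^p : z ∈ K}. -/
open scoped TensorProduct

/-!
If `(x, y)` and `(x u^p, y v^p)` both solve `x + y = 1` and `u ≠ v`, then
`x = ((1 - v) / (u - v))^p`. Hence two solutions in `G` with `x ∉ K^p` that agree modulo `G^p`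
coincide, and the solutions inject into `G / G^p`. As Frobenius is injective, `G` has no
`p`-torsion, so a relation among lifts of an `𝔽_p`-basis of `G / G^p` is divisible by every power
of `p`; the lifts are therefore independent and `|G / G^p| ≤ p^r`.
-/

open Module

section

variable {A : Type*} [AddCommGroup A] {p : ℕ}

lemma pow_dvd_of_sum_smul_eq_zero (htf : ∀ a : A, p • a = 0 → a = 0) {ι : Type*} [Fintype ι]
    {v : ι → A} (hv : ∀ c : ι → ℤ, ∑ i, c i • v i = 0 → ∀ i, (p : ℤ) ∣ c i) (k : ℕ) :
    ∀ c : ι → ℤ, ∑ i, c i • v i = 0 → ∀ i, (p : ℤ) ^ k ∣ c i := by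
  induction k with
  | zero => simp
  | succ k ih =>
    intro c hc i
    choose d hd using hv c hc
    have hd0 : ∑ i, d i • v i = 0 := htf _ <| by
      simp only [Finset.smul_sum, ← hc, hd, mul_smul, natCast_zsmul]
    rw [hd i, pow_succ']
    exact mul_dvd_mul_left _ (ih d hd0 i)

lemma linearIndependent_int_of_forall_dvd (hp : 1 < p) (htf : ∀ a : A, p • a = 0 → a = 0)
    {ι : Type*} [Fintype ι] {v : ι → A}
    (hv : ∀ c : ι → ℤ, ∑ i, c i • v i = 0 → ∀ i, (p : ℤ) ∣ c i) :
    LinearIndependent ℤ v :=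
  Fintype.linearIndependent_iff.mpr fun c hc i =>
    Int.eq_zero_of_dvd_of_natAbs_lt_natAbs (pow_dvd_of_sum_smul_eq_zero htf hv _ c hc i)
      (by simpa [Int.natAbs_pow] using Nat.lt_pow_self hp)

namespace ModN

lemma mkQ_eq_mkQ_iff {a b : A} : mkQ p a = mkQ p b ↔ ∃ c, b = a + p • c := by
  simp only [mkQ, Submodule.mkQ_apply, AddMonoidHom.coe_coe, Submodule.Quotient.eq,
    LinearMap.mem_range, LinearMap.lsmul_apply, natCast_zsmul]
  exact ⟨fun ⟨c, hc⟩ => ⟨-c, by rw [smul_neg, hc]; abel⟩,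
    fun ⟨c, hc⟩ => ⟨-c, by rw [smul_neg, hc]; abel⟩⟩

variable [Module.Finite ℤ A]

instance instModuleFiniteOfFinite : Module.Finite (ZMod p) (ModN A p) :=
  .of_restrictScalars_finite ℤ _ _

theorem finrank_le (hp : p.Prime) (htf : ∀ a : A, p • a = 0 → a = 0) :
    finrank (ZMod p) (ModN A p) ≤ finrank ℤ A := by
  have : Fact p.Prime := ⟨hp⟩
  let b := Module.finBasis (ZMod p) (ModN A p)
  have hsurj : ∀ i, ∃ a, mkQ p a = b i := fun i => Submodule.mkQ_surjective _ (b i)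
  choose v hv using hsurj
  have hli : LinearIndependent ℤ v := linearIndependent_int_of_forall_dvd hp.one_lt htf
    fun c hc i => by
      have hcb : ∑ i, (c i : ZMod p) • b i = 0 := by
        simpa [hv, Int.cast_smul_eq_zsmul] using congrArg (mkQ p) hc
      exact (ZMod.intCast_zmod_eq_zero_iff_dvd _ _).mp
        (Fintype.linearIndependent_iff.mp b.linearIndependent _ hcb i)
  simpa using hli.fintype_card_le_finrank

theorem natCard_le (hp : p.Prime) (htf : ∀ a : A, p • a = 0 → a = 0) :
    Nat.card (ModN A p) ≤ p ^ finrank ℤ A := by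
  have : Fact p.Prime := ⟨hp⟩
  rw [Module.natCard_eq_pow_finrank (K := ZMod p), Nat.card_zmod]
  exact Nat.pow_le_pow_right hp.pos (finrank_le hp htf)

end ModN

end

theorem Subgroup.finite_and_natCard_le_of_eq_mul_pow {M : Type*} [CommGroup M] {p : ℕ}
    (hp : p.Prime) (G : Subgroup M) [Group.FG G] (htf : ∀ g ∈ G, g ^ p = 1 → g = 1)
    {S : Set M} (hSG : S ⊆ G) (hS : ∀ a ∈ S, ∀ b ∈ S, ∀ g ∈ G, b = a * g ^ p → b = a) :
    S.Finite ∧ Nat.card S ≤ p ^ finrank ℤ (Additive G) := by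
  have : NeZero p := ⟨hp.ne_zero⟩
  have : Module.Finite ℤ (Additive G) :=
    Module.Finite.iff_addGroup_fg.mpr (GroupFG.iff_add_fg.mp ‹_›)
  have : Finite (ModN (Additive G) p) := Module.finite_of_finite (ZMod p)
  let f : S → ModN (Additive G) p := fun s => ModN.mkQ p (.ofMul ⟨s, hSG s.2⟩)
  have hf : f.Injective := by
    rintro ⟨a, ha⟩ ⟨b, hb⟩ hab
    obtain ⟨g, hg⟩ := ModN.mkQ_eq_mkQ_iff.mp hab
    refine Subtype.ext (hS a ha b hb g.toMul g.toMul.2 ?_).symm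
    simpa using congrArg (fun x => (x.toMul : M)) hg
  have htfA : ∀ a : Additive G, p • a = 0 → a = 0 := fun a ha =>
    congrArg Additive.ofMul <| Subtype.ext <|
      htf (a.toMul : M) a.toMul.2 (by simpa using congrArg (fun x => (x.toMul : M)) ha)
  exact ⟨Set.finite_coe_iff.mp (Finite.of_injective f hf),
    (Nat.card_le_card_of_injective f hf).trans (ModN.natCard_le hp htfA)⟩

section ExpChar

variable {R : Type*} [CommRing R] [IsReduced R] {p : ℕ} [ExpChar R p]

lemma eq_one_of_pow_char_eq_one {u : R} (h : u ^ p = 1) : u = 1 :=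
  frobenius_inj R p (by simpa [frobenius_def] using h)

lemma Units.prod_eq_one_of_pow_char_eq_one {g : Rˣ × Rˣ} (h : g ^ p = 1) : g = 1 := by
  rw [Prod.ext_iff, Units.ext_iff, Units.ext_iff] at h ⊢
  simpa using And.imp eq_one_of_pow_char_eq_one eq_one_of_pow_char_eq_one h

end ExpChar

section CharP

variable {K : Type*} [Field K] {p : ℕ} [Fact p.Prime] [CharP K p]

lemma eq_one_of_add_eq_one_of_mul_pow_add_mul_pow {x y u v : K} (hxy : x + y = 1)
    (hx : ¬ ∃ z, z ^ p = x) (h : x * u ^ p + y * v ^ p = 1) : u = 1 ∧ v = 1 := by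
  obtain rfl : u = v := by
    by_contra huv
    refine hx ⟨(1 - v) / (u - v), ?_⟩
    have hpow : u ^ p - v ^ p ≠ 0 := by
      rw [← sub_pow_char]; exact pow_ne_zero _ (sub_ne_zero.mpr huv)
    rw [div_pow, sub_pow_char, sub_pow_char, one_pow, div_eq_iff hpow]
    linear_combination v ^ p * hxy - h
  have hu : u ^ p = 1 := by linear_combination h - u ^ p * hxy
  exact ⟨eq_one_of_pow_char_eq_one hu, eq_one_of_pow_char_eq_one hu⟩

lemma Units.prod_eq_of_eq_mul_pow {a b g : Kˣ × Kˣ} (ha : (a.1 : K) + a.2 = 1)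
    (ha' : ¬ ∃ z : K, z ^ p = a.1) (hb : (b.1 : K) + b.2 = 1) (hab : b = a * g ^ p) : b = a := by
  subst hab
  obtain ⟨hg₁, hg₂⟩ := eq_one_of_add_eq_one_of_mul_pow_add_mul_pow ha ha' (by simpa using hb)
  simp [Prod.ext_iff, Units.ext_iff, hg₁, hg₂]

end CharP

/-- Let `K` be a field of characteristic `p > 0` and `G` a finitely generated
subgroup of `Kˣ × Kˣ` of rank `r`. Then `x + y = 1` has at most `p^r` solutions `(x, y) ∈ G`
with `x ∉ K^p` and `y ∉ K^p`. -/
theorem unit_equation_not_pth_power {p : ℕ} (hp : 0 < p) {K : Type*} [Field K] [CharP K p]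
    (G : Subgroup (Kˣ × Kˣ)) (hG : Group.FG ↥G) (r : ℕ)
    (hrank : Module.finrank ℚ (ℚ ⊗[ℤ] Additive ↥G) = r) :
    {s : Kˣ × Kˣ | s ∈ G ∧ (s.1 : K) + (s.2 : K) = 1 ∧
        (¬ ∃ z : K, z ^ p = (s.1 : K)) ∧ ¬ ∃ z : K, z ^ p = (s.2 : K)}.Finite ∧
      Nat.card {s : Kˣ × Kˣ | s ∈ G ∧ (s.1 : K) + (s.2 : K) = 1 ∧
        (¬ ∃ z : K, z ^ p = (s.1 : K)) ∧ ¬ ∃ z : K, z ^ p = (s.2 : K)} ≤ p ^ r := by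
  have : NeZero p := ⟨hp.ne'⟩
  have := CharP.char_is_prime_of_pos K p
  rw [← hrank, (TensorProduct.isBaseChange ℤ (Additive G) ℚ).finrank_eq]
  exact Subgroup.finite_and_natCard_le_of_eq_mul_pow Fact.out G
    (fun g _ => Units.prod_eq_one_of_pow_char_eq_one) (fun s hs => hs.1)
    fun a ha b hb g _ hab => Units.prod_eq_of_eq_mul_pow ha.2.1 ha.2.2.1 hb.2.1 hab
end

section
/- Let K be a field of characteristic p > 0 and let G be a subgroup of K^* × K^*. Let u = (u₁, u₂) and v = (v₁, v₂) be elements of G with u₁ + u₂ = 1 and v₁ + v₂ = 1, and suppose u₁ ∉ K^p and u₂ ∉ K^p, where K^p := {z^p : z ∈ K}. If u and v are congruent modulo G^p (i.e. v·u^{-1} ∈ G^p := {g^p : g ∈ G}), then u = v. -/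
/-- Let `K` be a field of characteristic `p > 0` and `G ≤ Kˣ × Kˣ`. If
`u = (u₁, u₂)` and `v = (v₁, v₂)` in `G` both solve `x + y = 1`, `u₁ ∉ K^p`, `u₂ ∉ K^p`,
and `v·u⁻¹ ∈ G^p`, then `u = v`. -/
theorem congruent_mod_Gp_eq {p : ℕ} (hp : 0 < p) {K : Type*} [Field K] [CharP K p]
    (G : Subgroup (Kˣ × Kˣ)) (u v : Kˣ × Kˣ) (hu : u ∈ G) (hv : v ∈ G)
    (husol : (u.1 : K) + (u.2 : K) = 1) (hvsol : (v.1 : K) + (v.2 : K) = 1)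
    (hu1 : ¬ ∃ z : K, z ^ p = (u.1 : K)) (hu2 : ¬ ∃ z : K, z ^ p = (u.2 : K))
    (hcong : ∃ g ∈ G, g ^ p = v * u⁻¹) : u = v := by
  have hprime : p.Prime := (CharP.char_is_prime_or_zero K p).resolve_right hp.ne'
  haveI : Fact p.Prime := ⟨hprime⟩
  obtain ⟨g, hg, hgp⟩ := hcong
  have hvu : v = g ^ p * u := by rw [hgp, inv_mul_cancel_right]
  set a : K := (g.1 : K) with ha0
  set b : K := (g.2 : K) with hb0
  set x : K := (u.1 : K) with hx0
  set y : K := (u.2 : K) with hy0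
  have hx : x ≠ 0 := Units.ne_zero _
  have hy : y ≠ 0 := Units.ne_zero _
  have hkey0 : a ^ p * x + b ^ p * y = 1 := by
    have h1 : (v.1 : K) = a ^ p * x := by
      rw [hvu]; simp [Prod.pow_fst, Units.val_mul, Units.val_pow_eq_pow_val]; rfl
    have h2 : (v.2 : K) = b ^ p * y := by
      rw [hvu]; simp [Prod.pow_snd, Units.val_mul, Units.val_pow_eq_pow_val]; rfl
    rw [← h1, ← h2]; exact hvsol
  have hkey : (a - 1) ^ p * x = (1 - b) ^ p * y := by
    rw [sub_pow_char, sub_pow_char, one_pow]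
    have : a ^ p * x + b ^ p * y = x + y := by rw [hkey0, husol]
    ring_nf
    ring_nf at this
    linear_combination this
  have hA : a = 1 := by
    by_contra hA
    have hd : a - 1 ≠ 0 := sub_ne_zero.mpr hA
    set c : K := (1 - b) / (a - 1) with hc0
    have hxc : x = c ^ p * y := by
      rw [hc0, div_pow, div_mul_eq_mul_div, eq_div_iff (pow_ne_zero _ hd)]
      linear_combination hkey
    have hcy : (1 + c) ^ p * y = 1 := by
      rw [add_pow_char, one_pow]
      rw [hxc] at husol
      linear_combination husol
    have hc1 : (1 + c) ≠ 0 := by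
      intro h
      rw [h, zero_pow hp.ne', zero_mul] at hcy
      exact zero_ne_one hcy
    exact hu2 ⟨(1 + c)⁻¹, by rw [inv_pow, eq_comm]; exact eq_inv_of_mul_eq_one_right hcy⟩
  have hB : b = 1 := by
    rw [hA, sub_self, zero_pow hp.ne', zero_mul] at hkey
    have : (1 - b) ^ p = 0 := by
      rcases mul_eq_zero.mp hkey.symm with h | h
      · exact h
      · exact absurd h hy
    have := pow_eq_zero_iff hp.ne' |>.mp this
    exact (sub_eq_zero.mp this).symm
  have hg1 : g = 1 := Prod.ext (Units.val_eq_one.mp hA) (Units.val_eq_one.mp hB)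
  rw [hvu, hg1, one_pow, one_mul]
end

section
/- For every positive integer N, one has the equality of rational numbers W_N(2, −1) = 4^N · binom(3N/2, N), where binom(3N/2, N) := (1/N!) · Π_{j=0}^{N−1} (3N/2 − j) is the generalized binomial coefficient. -/
/-- The binary form `W_N(X, Y) = Σ_{m=0}^{N} C(2N−m, N−m) · C(N+m, m) · X^{N−m} · (−Y)^m`. -/
noncomputable def W {R : Type*} [CommRing R] (N : ℕ) (X Y : R) : R :=
  ∑ m ∈ Finset.range (N + 1),
    ((2 * N - m).choose (N - m) : R) * ((N + m).choose m : R) * X ^ (N - m) * (-Y) ^ m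

/-!
Both sides satisfy the two-term recurrence
`(N+1)(N+2)² a_{N+2} = 4(3N+2)(3N+4)(3N+6) a_N` and agree for `N = 0, 1`.
For the right-hand side this is the shift `binom(t+3, N+2) ↔ binom(t, N)` of generalized
binomial coefficients at `t = 3N/2`. For the sum it is Zeilberger's creative telescoping: the
summands of `W_{N+2}(2,-1)` and `W_N(2,-1)` differ termwise by a difference `G(m+1) - G(m)` of
a hypergeometric certificate, and the sum of these differences collapses to a boundary term.
-/

open Finset Nat

theorem eq_of_two_step_recurrence {M : Type*} [Mul M] [Zero M] [IsLeftCancelMulZero M]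
    {c d u v : ℕ → M}
    (hc : ∀ n, c n ≠ 0) (hu : ∀ n, c n * u (n + 2) = d n * u n)
    (hv : ∀ n, c n * v (n + 2) = d n * v n) (h0 : u 0 = v 0) (h1 : u 1 = v 1) : u = v := by
  funext n
  induction n using Nat.twoStepInduction with
  | zero => exact h0
  | one => exact h1
  | more n ih _ => exact mul_left_cancel₀ (hc n) (by rw [hu, hv, ih])

theorem prod_range_add_three_sub {R : Type*} [CommRing R] (x : R) (n : ℕ) :
    ∏ j ∈ range (n + 3), (x + 3 - j) = (x + 3) * (x + 2) * (x + 1) * ∏ j ∈ range n, (x - j) := by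
  simp only [prod_range_succ', cast_add, cast_one, cast_zero]
  rw [prod_congr rfl fun (j : ℕ) _ => show x + 3 - ((j : R) + 1 + 1 + 1) = x - j by ring]
  ring

/-- The generalized binomial coefficient `binom(t, n)`. -/
noncomputable def gbinom {K : Type*} [Field K] (t : K) (n : ℕ) : K :=
  1 / (n ! : K) * ∏ j ∈ range n, (t - j)

theorem gbinom_add_three_add_two {K : Type*} [Field K] [CharZero K] (t : K) (n : ℕ) :
    (n + 1) * (n + 2) * (t + 1 - n) * gbinom (t + 3) (n + 2)
      = (t + 1) * (t + 2) * (t + 3) * gbinom t n := by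
  have hprod : (t + 1 - n) * ∏ j ∈ range (n + 2), (t + 3 - j)
      = (t + 1) * (t + 2) * (t + 3) * ∏ j ∈ range n, (t - j) := by
    have := prod_range_add_three_sub t n
    rw [prod_range_succ] at this
    push_cast at this
    linear_combination this
  have hfac : ((n + 2)! : K) = (n + 2) * (n + 1) * n ! := by
    push_cast [factorial_succ]; ring
  have hn : (n ! : K) ≠ 0 := by exact_mod_cast factorial_ne_zero n
  have hn1 : (n : K) + 1 ≠ 0 := by exact_mod_cast n.succ_ne_zero
  have hn2 : (n : K) + 2 ≠ 0 := by exact_mod_cast (n + 1).succ_ne_zero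
  unfold gbinom
  rw [hfac]
  field_simp
  linear_combination hprod

theorem four_pow_mul_gbinom_three_halves_recurrence (n : ℕ) :
    ((n : ℚ) + 1) * (n + 2) ^ 2 * (4 ^ (n + 2) * gbinom (3 * ((n + 2 : ℕ) : ℚ) / 2) (n + 2))
      = 4 * (3 * n + 2) * (3 * n + 4) * (3 * n + 6) * (4 ^ n * gbinom (3 * n / 2 : ℚ) n) := by
  have h := gbinom_add_three_add_two (3 * n / 2 : ℚ) n
  rw [show (3 * ((n + 2 : ℕ) : ℚ) / 2) = 3 * n / 2 + 3 by push_cast; ring, pow_add]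
  linear_combination 32 * (4 : ℚ) ^ n * h

namespace W

/-- The term of index `m` of `W_{m+d}(2, -1)`, indexed by `d = N - m` to avoid truncated
subtraction. -/
def summand (m d : ℕ) : ℚ := ((m + 2 * d).choose d : ℚ) * ((2 * m + d).choose m : ℚ) * 2 ^ d

theorem summand_eq_factorial (m d : ℕ) :
    summand m d = (m + 2 * d)! * (2 * m + d)! * 2 ^ d / (d ! * m ! * ((m + d)! : ℚ) ^ 2) := by
  rw [summand, cast_choose ℚ (by omega : d ≤ m + 2 * d), cast_choose ℚ (by omega : m ≤ 2 * m + d),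
    show m + 2 * d - d = m + d by omega, show 2 * m + d - m = m + d by omega]
  field_simp

theorem summand_succ_right (m d : ℕ) :
    summand m (d + 1) = 2 * (m + 2 * d + 1) * (m + 2 * d + 2) * (2 * m + d + 1)
      / ((d + 1) * (m + d + 1) ^ 2) * summand m d := by
  rw [summand_eq_factorial, summand_eq_factorial,
    show m + 2 * (d + 1) = m + 2 * d + 1 + 1 by ring, show 2 * m + (d + 1) = 2 * m + d + 1 by ring,
    show m + (d + 1) = m + d + 1 by ring]
  push_cast [factorial_succ]
  field_simp
  ring

theorem summand_succ_left (m d : ℕ) :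
    summand (m + 1) d = (m + 2 * d + 1) * (2 * m + d + 1) * (2 * m + d + 2)
      / ((m + 1) * (m + d + 1) ^ 2) * summand m d := by
  rw [summand_eq_factorial, summand_eq_factorial, show m + 1 + 2 * d = m + 2 * d + 1 by ring,
    show 2 * (m + 1) + d = 2 * m + d + 1 + 1 by ring, show m + 1 + d = m + d + 1 by ring]
  push_cast [factorial_succ]
  field_simp
  ring

theorem two_neg_one_eq_sum (N : ℕ) :
    W N (2 : ℚ) (-1) = ∑ m ∈ range (N + 1), summand m (N - m) := by
  refine sum_congr rfl fun m hm => ?_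
  have hmN : m ≤ N := Nat.lt_succ_iff.mp (mem_range.mp hm)
  rw [summand, show 2 * N - m = m + 2 * (N - m) by omega, show N + m = 2 * m + (N - m) by omega]
  simp

-- Found by Zeilberger's algorithm; `zeilbergerCert m (N - m)` is the certificate `G(m)` above.
def zeilbergerPoly (n m : ℚ) : ℚ :=
  -(48 + 232 * n + 414 * n ^ 2 + 349 * n ^ 3 + 141 * n ^ 4 + 22 * n ^ 5)
  + m * (74 + 246 * n + 300 * n ^ 2 + 159 * n ^ 3 + 31 * n ^ 4)
  + m ^ 2 * (-27 - 60 * n - 42 * n ^ 2 - 10 * n ^ 3)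
  + m ^ 3 * (-1 - 6 * n - 4 * n ^ 2)
  + m ^ 4 * (3 + 4 * n) - m ^ 5

def zeilbergerCert (m d : ℕ) : ℚ :=
  8 * m * zeilbergerPoly (m + d) m * summand m d / ((m + d + 1) * (d + 1) * (d + 2))

theorem summand_zeilberger {n m e : ℕ} (hn : n = m + e + 1) :
    ((n : ℚ) + 1) * (n + 2) ^ 2 * summand m (e + 3)
      = 4 * (3 * (n : ℚ) + 2) * (3 * n + 4) * (3 * n + 6) * summand m (e + 1)
          + (zeilbergerCert (m + 1) e - zeilbergerCert m (e + 1)) := by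
  subst hn
  rw [zeilbergerCert, zeilbergerCert, summand_succ_right m (e + 2), summand_succ_right m (e + 1),
    summand_succ_right m e, summand_succ_left]
  unfold zeilbergerPoly
  push_cast
  field_simp
  ring

theorem summand_zeilberger_boundary (n : ℕ) :
    ((n : ℚ) + 1) * (n + 2) ^ 2 * (summand n 2 + summand (n + 1) 1 + summand (n + 2) 0)
        + zeilbergerCert n 0
      = 4 * (3 * (n : ℚ) + 2) * (3 * n + 4) * (3 * n + 6) * summand n 0 := by
  rw [zeilbergerCert, summand_succ_left (n + 1), summand_succ_left n 1, summand_succ_left n 0,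
    summand_succ_right n 1, summand_succ_right n 0]
  unfold zeilbergerPoly
  push_cast
  field_simp
  ring

theorem two_neg_one_recurrence (n : ℕ) :
    ((n : ℚ) + 1) * (n + 2) ^ 2 * W (n + 2) (2 : ℚ) (-1)
      = 4 * (3 * (n : ℚ) + 2) * (3 * n + 4) * (3 * n + 6) * W n (2 : ℚ) (-1) := by
  have bulk : ∑ m ∈ range n, ((n : ℚ) + 1) * (n + 2) ^ 2 * summand m (n + 2 - m)
      = ∑ m ∈ range n, (4 * (3 * (n : ℚ) + 2) * (3 * n + 4) * (3 * n + 6) * summand m (n - m)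
          + (zeilbergerCert (m + 1) (n - (m + 1)) - zeilbergerCert m (n - m))) := by
    refine sum_congr rfl fun m hm => ?_
    obtain ⟨e, he⟩ : ∃ e, n = m + e + 1 := ⟨n - m - 1, by have := mem_range.mp hm; omega⟩
    rw [show n + 2 - m = e + 3 by omega, show n - m = e + 1 by omega,
      show n - (m + 1) = e by omega]
    exact summand_zeilberger he
  have telescope : ∑ m ∈ range n, (zeilbergerCert (m + 1) (n - (m + 1)) - zeilbergerCert m (n - m))
      = zeilbergerCert n 0 := by
    rw [sum_range_sub (fun m => zeilbergerCert m (n - m))]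
    simp [zeilbergerCert]
  rw [← mul_sum, sum_add_distrib, telescope, ← mul_sum] at bulk
  rw [two_neg_one_eq_sum, two_neg_one_eq_sum, sum_range_succ, sum_range_succ, sum_range_succ,
    sum_range_succ]
  simp only [Nat.sub_self, show n + 2 - n = 2 by omega, show n + 2 - (n + 1) = 1 by omega]
  linear_combination bulk + summand_zeilberger_boundary n

end W

theorem W_two_neg_one_general (N : ℕ) :
    W N (2 : ℚ) (-1) =
      4 ^ N * ((1 / (N.factorial : ℚ)) * ∏ j ∈ Finset.range N, ((3 * N : ℚ) / 2 - j)) := by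
  have h := eq_of_two_step_recurrence (u := fun n => W n (2 : ℚ) (-1))
    (v := fun n => 4 ^ n * gbinom (3 * n / 2 : ℚ) n) (fun n => by positivity)
    W.two_neg_one_recurrence four_pow_mul_gbinom_three_halves_recurrence
    (by norm_num [W, gbinom]) (by norm_num [W, gbinom, sum_range_succ])
  exact congrFun h N

/-- For every positive integer `N`, one has
`W_N(2, −1) = 4^N · binom(3N/2, N)` in `ℚ`, where
`binom(3N/2, N) = (1/N!) · Π_{j=0}^{N−1} (3N/2 − j)`. -/
theorem W_two_neg_one (N : ℕ) (hN : 0 < N) :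
    W N (2 : ℚ) (-1) =
      4 ^ N * ((1 / (N.factorial : ℚ)) * ∏ j ∈ Finset.range N, ((3 * N : ℚ) / 2 - j)) :=
  W_two_neg_one_general N
end

section
/- Let p be an odd prime number and let N be a positive integer with N < p/3 − 2. Then every nonzero integer c satisfying the identity det [[Z^{2N+1}·W_N(X,Y), Y^{2N+1}·W_N(Z,X)], [Z^{2N+3}·W_{N+1}(X,Y), Y^{2N+3}·W_{N+1}(Z,X)]] = c · (XYZ)^{2N+1} · (X² + XY + Y²) in ℤ[X, Y], where Z := −X − Y, is not divisible by p. -/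
open Finset Polynomial

lemma map_W {R S : Type*} [CommRing R] [CommRing S] (f : R →+* S) (N : ℕ) (x y : R) :
    f (W N x y) = W N (f x) (f y) := by
  simp [W, map_sum, map_mul, map_pow, map_neg, map_natCast]

lemma sum_choose_mul_choose (n : ℕ) : ∀ a b : ℕ,
    ∑ j ∈ range (n + 1), (j.choose a) * ((n - j).choose b) = (n + 1).choose (a + b + 1) := by
  induction n with
  | zero =>
    intro a b
    match a, b with
    | 0, 0 => simp
    | a + 1, b =>
      rw [Finset.sum_range_one, Nat.choose_eq_zero_of_lt (by omega : (0:ℕ) < a + 1), zero_mul,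
        Nat.choose_eq_zero_of_lt (by omega : (1:ℕ) < a + 1 + b + 1)]
    | 0, b + 1 =>
      rw [Finset.sum_range_one, Nat.choose_eq_zero_of_lt (by omega : (0:ℕ) < b + 1), mul_zero,
        Nat.choose_eq_zero_of_lt (by omega : (1:ℕ) < 0 + (b + 1) + 1)]
  | succ n ih =>
    intro a b
    rw [Finset.sum_range_succ']
    have hsimp : ∀ i ∈ range (n + 1),
        ((i + 1).choose a) * ((n + 1 - (i + 1)).choose b)
          = ((i + 1).choose a) * ((n - i).choose b) := by
      intro i _; congr 2; omega
    rw [Finset.sum_congr rfl hsimp]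
    match a with
    | 0 =>
      have h0 := ih 0 b
      simp only [Nat.choose_zero_right, one_mul, Nat.zero_add, zero_add, Nat.sub_zero] at h0 ⊢
      rw [h0, show (n + 1 + 1).choose (b + 1)
          = (n + 1).choose b + (n + 1).choose (b + 1) from Nat.choose_succ_succ (n + 1) b]
      omega
    | a + 1 =>
      have hsplit : ∀ i ∈ range (n + 1), ((i + 1).choose (a + 1)) * ((n - i).choose b)
          = (i.choose a) * ((n - i).choose b) + (i.choose (a + 1)) * ((n - i).choose b) := by
        intro i _; rw [Nat.choose_succ_succ, add_mul]
      rw [Finset.sum_congr rfl hsplit, Finset.sum_add_distrib, ih a b, ih (a + 1) b,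
        Nat.choose_eq_zero_of_lt (by omega : (0:ℕ) < a + 1), zero_mul, add_zero,
        show a + 1 + b + 1 = a + b + 1 + 1 from by omega,
        show (n + 1 + 1).choose (a + b + 1 + 1)
          = (n + 1).choose (a + b + 1) + (n + 1).choose (a + b + 1 + 1) from
          Nat.choose_succ_succ (n + 1) (a + b + 1)]

lemma S_eq (N : ℕ) :
    ∑ m ∈ range (N + 1), (2 * N - m).choose (N - m) * (N + m).choose m
      = (3 * N + 1).choose (2 * N + 1) := by
  have hterm : ∀ m, m ∈ range (N + 1) →
      (2 * N - m).choose (N - m) * (N + m).choose m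
        = (N + m).choose N * ((3 * N - (N + m)).choose N) := by
    intro m hm
    have hm' : m ≤ N := Nat.lt_succ_iff.mp (mem_range.mp hm)
    have h1 : (2 * N - m).choose (N - m) = (2 * N - m).choose N := by
      have h := Nat.choose_symm (show N ≤ 2 * N - m by omega)
      rwa [show 2 * N - m - N = N - m from by omega] at h
    have h2 : (N + m).choose m = (N + m).choose N := by
      have h := Nat.choose_symm (Nat.le_add_right N m)
      rwa [Nat.add_sub_cancel_left] at h
    rw [h1, h2]
    have : 3 * N - (N + m) = 2 * N - m := by omega
    rw [this, mul_comm]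
  rw [Finset.sum_congr rfl hterm]
  have hIco : ∑ m ∈ range (N + 1), (N + m).choose N * ((3 * N - (N + m)).choose N)
      = ∑ j ∈ Ico N (2 * N + 1), j.choose N * ((3 * N - j).choose N) := by
    rw [Finset.sum_Ico_eq_sum_range]
    have : 2 * N + 1 - N = N + 1 := by omega
    rw [this]
  rw [hIco]
  have hsub : ∑ j ∈ Ico N (2 * N + 1), j.choose N * ((3 * N - j).choose N)
      = ∑ j ∈ range (3 * N + 1), j.choose N * ((3 * N - j).choose N) := by
    apply Finset.sum_subset
    · intro x hx
      simp only [mem_Ico, mem_range] at *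
      omega
    · intro x hx hnx
      simp only [mem_Ico, mem_range, not_and, not_lt] at hx hnx
      rcases lt_or_ge x N with h | h
      · rw [Nat.choose_eq_zero_of_lt h, zero_mul]
      · have : 3 * N - x < N := by omega
        rw [Nat.choose_eq_zero_of_lt this, mul_zero]
  rw [hsub, sum_choose_mul_choose]
  congr 1
  omega

lemma W_neg_one_one (N : ℕ) :
    W N (-1 : ℤ) 1 = (-1) ^ N *
      ((∑ m ∈ range (N + 1), (2 * N - m).choose (N - m) * (N + m).choose m : ℕ) : ℤ) := by
  rw [W, Nat.cast_sum, Finset.mul_sum]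
  apply Finset.sum_congr rfl
  intro m hm
  have hm' : m ≤ N := Nat.lt_succ_iff.mp (mem_range.mp hm)
  have hpow : (-1 : ℤ) ^ (N - m) * (-1 : ℤ) ^ m = (-1 : ℤ) ^ N := by
    rw [← pow_add]; congr 1; omega
  push_cast
  linear_combination (((2 * N - m).choose (N - m) : ℤ) * ((N + m).choose m : ℤ)) * hpow

lemma W_one_zero (N : ℕ) : W (N + 1) (1 : ℤ) 0 = ((2 * N + 2).choose (N + 1) : ℤ) := by
  rw [W, Finset.sum_eq_single 0
    (fun m _ hm0 => by rw [neg_zero, zero_pow hm0, mul_zero])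
    (fun h => absurd (Finset.mem_range.mpr (Nat.succ_pos _)) h)]
  simp only [Nat.sub_zero, Nat.add_zero, Nat.choose_zero_right, Nat.cast_one, mul_one,
    one_pow, neg_zero, pow_zero]
  rw [show 2 * (N + 1) = 2 * N + 2 from by ring]

/-- Let `p` be an odd prime and `N` a positive integer with `N < p/3 − 2`. Then
every nonzero integer `c` satisfying the determinant identity of Lemma 3.3(3) is not
divisible by `p`. -/
theorem c_N_not_div_p (p : ℕ) (hp : p.Prime) (hodd : Odd p) (N : ℕ) (hN : 0 < N)
    (hNp : (N : ℚ) < p / 3 - 2) (c : ℤ) (hc : c ≠ 0)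
    (hdet :
      letI X : MvPolynomial (Fin 2) ℤ := MvPolynomial.X 0
      letI Y : MvPolynomial (Fin 2) ℤ := MvPolynomial.X 1
      letI Z : MvPolynomial (Fin 2) ℤ := -X - Y
      Matrix.det !![Z ^ (2 * N + 1) * W N X Y, Y ^ (2 * N + 1) * W N Z X;
          Z ^ (2 * N + 3) * W (N + 1) X Y, Y ^ (2 * N + 3) * W (N + 1) Z X] =
        (c : MvPolynomial (Fin 2) ℤ) * (X * Y * Z) ^ (2 * N + 1) * (X ^ 2 + X * Y + Y ^ 2)) :
    ¬ (p : ℤ) ∣ c := by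
  -- p > 3N + 6
  have h36 : 3 * N + 6 < p := by
    have : ((3 * N + 6 : ℕ) : ℚ) < (p : ℚ) := by push_cast; linarith
    exact_mod_cast this
  -- Apply the ring hom sending X ↦ 1, Y ↦ t
  set φ : MvPolynomial (Fin 2) ℤ →+* Polynomial ℤ :=
    (MvPolynomial.aeval ![(1 : Polynomial ℤ), Polynomial.X]).toRingHom with hφ
  rw [Matrix.det_fin_two_of] at hdet
  have hdet' := congrArg φ hdet
  simp only [map_sub, map_mul, map_pow, map_neg, map_add, map_intCast, map_W, hφ,
    AlgHom.toRingHom_eq_coe, RingHom.coe_coe, MvPolynomial.aeval_X,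
    Matrix.cons_val_zero, Matrix.cons_val_one, Matrix.head_cons] at hdet'
  -- cancel t^(2N+1)
  set t : Polynomial ℤ := Polynomial.X
  have key : t ^ (2 * N + 1) *
      (t ^ 2 * ((-1 - t) ^ (2 * N + 1) * W N 1 t * W (N + 1) (-1 - t) 1)
        - W N (-1 - t) 1 * ((-1 - t) ^ (2 * N + 3) * W (N + 1) 1 t)) =
      t ^ (2 * N + 1) *
      ((c : Polynomial ℤ) * (-1 - t) ^ (2 * N + 1) * (1 + t + t ^ 2)) := by
    have e1 : t ^ (2 * N + 3) = t ^ (2 * N + 1) * t ^ 2 := by rw [← pow_add]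
    have e2 : (1 * t * (-1 - t)) ^ (2 * N + 1)
        = t ^ (2 * N + 1) * (-1 - t) ^ (2 * N + 1) := by rw [one_mul, mul_pow]
    rw [e1, e2] at hdet'
    linear_combination hdet'
  have hcancel := mul_left_cancel₀ (pow_ne_zero (2 * N + 1) (Polynomial.X_ne_zero)) key
  -- evaluate at 0
  have hev := congrArg (Polynomial.eval 0) hcancel
  have evW : ∀ (M : ℕ) (a b : Polynomial ℤ),
      Polynomial.eval 0 (W M a b) = W M (a.eval 0) (b.eval 0) := fun M a b =>
    map_W (Polynomial.evalRingHom 0) M a b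
  simp only [Polynomial.eval_mul, Polynomial.eval_sub, Polynomial.eval_add,
    Polynomial.eval_pow, Polynomial.eval_neg, Polynomial.eval_one, Polynomial.eval_X,
    Polynomial.eval_intCast, evW, t] at hev
  norm_num at hev
  -- hev should now be an equation in ℤ relating W N (-1) 1, W (N+1) 1 0 and c
  have hodd3 : Odd (2 * N + 3) := ⟨N + 1, by ring⟩
  rw [hodd3.neg_one_pow] at hev
  have hc' : c = -(W N (-1 : ℤ) 1 * W (N + 1) (1 : ℤ) 0) := by
    rw [Odd.neg_one_pow (⟨N, by ring⟩ : Odd (2 * N + 1))] at hev; linear_combination hev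
  rw [W_neg_one_one, W_one_zero, S_eq] at hc'
  set S : ℕ := (3 * N + 1).choose (2 * N + 1)
  set B : ℕ := (2 * N + 2).choose (N + 1)
  intro hdvd
  rw [hc'] at hdvd
  have hdvd2 : (p : ℤ) ∣ (S : ℤ) * (B : ℤ) := by
    rcases Nat.even_or_odd N with h | h <;> rw [h.neg_one_pow] at hdvd <;> simpa using hdvd
  have hdvd3 : p ∣ S * B := by exact_mod_cast hdvd2
  rcases (Nat.Prime.dvd_mul hp).mp hdvd3 with h | h
  · have hfac : p ∣ (3 * N + 1).factorial := by
      have := Nat.choose_mul_factorial_mul_factorial (show 2 * N + 1 ≤ 3 * N + 1 by omega)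
      calc p ∣ S := h
        _ ∣ (3 * N + 1).factorial := ⟨(2 * N + 1).factorial * (3 * N + 1 - (2 * N + 1)).factorial,
          by rw [← this]; ring⟩
    have := (hp.dvd_factorial).mp hfac
    omega
  · have hfac : p ∣ (2 * N + 2).factorial := by
      have := Nat.choose_mul_factorial_mul_factorial (show N + 1 ≤ 2 * N + 2 by omega)
      calc p ∣ B := h
        _ ∣ (2 * N + 2).factorial := ⟨(N + 1).factorial * (2 * N + 2 - (N + 1)).factorial,
          by rw [← this]; ring⟩
    have := (hp.dvd_factorial).mp hfac
    omega
end

section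
/- Assume the valuation setup with sum formula on a field K. Let a, b, c be nonzero elements of K, and let (x₁, y₁, z₁) and (x₂, y₂, z₂) be two K-linearly independent vectors in K³ such that a·x_j + b·y_j + c·z_j = 0 for j = 1, 2. Then H^hom(a, b, c) ≤ H^hom(x₁, y₁, z₁) + H^hom(x₂, y₂, z₂). -/
/-- A valuation setup with sum formula on a field `K`: for each `i` in the index set `I`, a
map `v i : K → ℤ` which restricts to a group homomorphism `Kˣ → ℤ` satisfying the
ultrametric inequality, with only finitely many `v i` nonzero at each `x ≠ 0`, positive
integer degrees `deg i`, and the sum formula `Σ_i v i x · deg i = 0` for `x ≠ 0`. -/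
structure ValuationSetup (K : Type*) [Field K] (I : Type*) where
  v : I → K → ℤ
  deg : I → ℕ
  deg_pos : ∀ i, 0 < deg i
  v_mul : ∀ i (x y : K), x ≠ 0 → y ≠ 0 → v i (x * y) = v i x + v i y
  v_add : ∀ i (x y : K), x ≠ 0 → y ≠ 0 → x + y ≠ 0 → min (v i x) (v i y) ≤ v i (x + y)
  finite_support : ∀ x : K, x ≠ 0 → {i | v i x ≠ 0}.Finite
  sum_formula : ∀ x : K, x ≠ 0 → ∑ᶠ i, v i x * (deg i : ℤ) = 0

/-- The homogeneous height `H^hom(P) = −Σ_i min{v i (P j) : P j ≠ 0} · deg i` of a (nonzero)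
vector `P`. -/
noncomputable def Hhom {K : Type*} [Field K] {I : Type*} (VS : ValuationSetup K I)
    {m : ℕ} (P : Fin m → K) : ℤ :=
  -∑ᶠ i, sInf ((fun j => VS.v i (P j)) '' {j | P j ≠ 0}) * (VS.deg i : ℤ)

/-!
The relations say that `(a, b, c)` is orthogonal to `P₁ = (x₁, y₁, z₁)` and `P₂ = (x₂, y₂, z₂)`,
so it is a nonzero multiple of the cross product `P₁ × P₂`, which is nonzero by independence.
By the sum formula the height is invariant under scaling. Each coordinate of `P₁ × P₂` is a
difference of two products of a coordinate of `P₁` with one of `P₂`, so by the ultrametric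
inequality its `v i` is at least the sum of the minima of `v i` on `P₁` and on `P₂`; summing over
`i` gives `H^hom(P₁ × P₂) ≤ H^hom(P₁) + H^hom(P₂)`.
-/

open Matrix

namespace ValuationSetup

variable {K : Type*} [Field K] {I : Type*} (VS : ValuationSetup K I)

theorem v_one (i : I) : VS.v i 1 = 0 := by
  have h := VS.v_mul i 1 1 one_ne_zero one_ne_zero
  rw [mul_one] at h
  omega

-- Setting `v i 0 = ⊤` lets the ultrametric estimates below ignore vanishing coordinates.
open Classical in
noncomputable def addValuation (i : I) : AddValuation K (WithTop ℤ) :=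
  AddValuation.of (fun x => if x = 0 then ⊤ else (VS.v i x : WithTop ℤ)) (if_pos rfl)
    (by simp [v_one])
    (fun x y => by
      by_cases hx : x = 0
      · simp [hx]
      by_cases hy : y = 0
      · simp [hy]
      by_cases hxy : x + y = 0
      · simp [hxy]
      simp only [hx, hy, hxy, if_false, ← WithTop.coe_min, WithTop.coe_le_coe]
      exact VS.v_add i x y hx hy hxy)
    (fun x y => by
      by_cases hx : x = 0
      · simp [hx]
      by_cases hy : y = 0
      · simp [hy]
      simp only [mul_eq_zero, hx, hy, or_self, if_false, VS.v_mul i x y hx hy, WithTop.coe_add])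

variable {VS}

theorem addValuation_of_ne_zero {i : I} {x : K} (hx : x ≠ 0) :
    VS.addValuation i x = VS.v i x :=
  if_neg hx

variable (VS)

noncomputable def minVal (i : I) {m : ℕ} (P : Fin m → K) : ℤ :=
  sInf ((fun j => VS.v i (P j)) '' {j | P j ≠ 0})

variable {VS} {m : ℕ} {i : I}

theorem minVal_le_addValuation (P : Fin m → K) (j : Fin m) :
    (VS.minVal i P : WithTop ℤ) ≤ VS.addValuation i (P j) := by
  by_cases hj : P j = 0
  · simp [hj]
  rw [addValuation_of_ne_zero hj, WithTop.coe_le_coe]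
  exact csInf_le ((Set.toFinite _).image _).bddBelow ⟨j, hj, rfl⟩

theorem le_minVal {P : Fin m → K} (hP : P ≠ 0) {n : ℤ}
    (h : ∀ j, (n : WithTop ℤ) ≤ VS.addValuation i (P j)) : n ≤ VS.minVal i P := by
  obtain ⟨j₀, hj₀⟩ := Function.ne_iff.mp hP
  refine le_csInf ⟨_, j₀, hj₀, rfl⟩ ?_
  rintro _ ⟨j, hj, rfl⟩
  simpa [addValuation_of_ne_zero hj] using h j

theorem exists_minVal_eq {P : Fin m → K} (hP : P ≠ 0) :
    ∃ j, P j ≠ 0 ∧ VS.minVal i P = VS.v i (P j) := by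
  obtain ⟨j₀, hj₀⟩ := Function.ne_iff.mp hP
  have hne : ((fun j => VS.v i (P j)) '' {j | P j ≠ 0}).Nonempty := ⟨_, j₀, hj₀, rfl⟩
  obtain ⟨j, hj, hmin⟩ := hne.csInf_mem ((Set.toFinite _).image _)
  exact ⟨j, hj, hmin.symm⟩

theorem minVal_smul {μ : K} (hμ : μ ≠ 0) {P : Fin m → K} (hP : P ≠ 0) :
    VS.minVal i (μ • P) = VS.v i μ + VS.minVal i P := by
  obtain ⟨j₀, hj₀⟩ := Function.ne_iff.mp hP
  have hsupp : {j | (μ • P) j ≠ 0} = {j | P j ≠ 0} := by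
    ext j; simp [hμ]
  have himage : (fun j => VS.v i ((μ • P) j)) '' {j | (μ • P) j ≠ 0} =
      (VS.v i μ + ·) '' ((fun j => VS.v i (P j)) '' {j | P j ≠ 0}) := by
    rw [hsupp, Set.image_image]
    refine Set.image_congr fun j hj => ?_
    exact VS.v_mul i μ (P j) hμ hj
  have hne : ((fun j => VS.v i (P j)) '' {j | P j ≠ 0}).Nonempty := ⟨_, j₀, hj₀, rfl⟩
  rw [minVal, minVal, himage]
  exact (Set.Finite.map_sInf_of_monotone (fun _ _ h => add_le_add_right h (VS.v i μ)) hne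
    ((Set.toFinite _).image _)).symm

theorem minVal_add_minVal_le_minVal_cross {P Q : Fin 3 → K} (hPQ : P ⨯₃ Q ≠ 0) :
    VS.minVal i P + VS.minVal i Q ≤ VS.minVal i (P ⨯₃ Q) := by
  have hterm : ∀ j k, ((VS.minVal i P + VS.minVal i Q : ℤ) : WithTop ℤ) ≤
      VS.addValuation i (P j * Q k) := fun j k => by
    rw [WithTop.coe_add, AddValuation.map_mul]
    exact add_le_add (minVal_le_addValuation P j) (minVal_le_addValuation Q k)
  refine le_minVal hPQ fun j => ?_
  fin_cases j <;> simp only [cross_apply] <;>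
    exact (le_min (hterm _ _) (hterm _ _)).trans (AddValuation.map_sub _ _ _)

variable (VS)

theorem hasFiniteSupport_v_mul_deg {x : K} (hx : x ≠ 0) :
    Function.HasFiniteSupport fun i => VS.v i x * (VS.deg i : ℤ) :=
  (VS.finite_support x hx).subset fun _ hi => left_ne_zero_of_mul hi

theorem hasFiniteSupport_minVal_mul_deg {P : Fin m → K} (hP : P ≠ 0) :
    Function.HasFiniteSupport fun i => VS.minVal i P * (VS.deg i : ℤ) := by
  refine (Set.finite_iUnion fun j : {j // P j ≠ 0} =>
    VS.hasFiniteSupport_v_mul_deg j.2).subset fun i hi => ?_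
  obtain ⟨j, hj, hmin⟩ := exists_minVal_eq (VS := VS) (i := i) hP
  exact Set.mem_iUnion.mpr ⟨⟨j, hj⟩, by simpa [hmin] using hi⟩

end ValuationSetup

section Height

open ValuationSetup

variable {K : Type*} [Field K] {I : Type*} (VS : ValuationSetup K I) {m : ℕ}

theorem Hhom_eq_neg_finsum_minVal (P : Fin m → K) :
    Hhom VS P = -∑ᶠ i, VS.minVal i P * (VS.deg i : ℤ) :=
  rfl

theorem Hhom_smul {μ : K} (hμ : μ ≠ 0) {P : Fin m → K} (hP : P ≠ 0) :
    Hhom VS (μ • P) = Hhom VS P := by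
  simp only [Hhom_eq_neg_finsum_minVal, minVal_smul hμ hP, add_mul]
  rw [finsum_add_distrib (VS.hasFiniteSupport_v_mul_deg hμ)
    (VS.hasFiniteSupport_minVal_mul_deg hP), VS.sum_formula μ hμ, zero_add]

theorem Hhom_cross_le {P Q : Fin 3 → K} (hPQ : P ⨯₃ Q ≠ 0) :
    Hhom VS (P ⨯₃ Q) ≤ Hhom VS P + Hhom VS Q := by
  have hP : P ≠ 0 := by rintro rfl; simp at hPQ
  have hQ : Q ≠ 0 := by rintro rfl; simp at hPQ
  simp only [Hhom_eq_neg_finsum_minVal]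
  rw [← neg_add, neg_le_neg_iff, ← finsum_add_distrib (VS.hasFiniteSupport_minVal_mul_deg hP)
    (VS.hasFiniteSupport_minVal_mul_deg hQ)]
  refine finsum_le_finsum' ((VS.hasFiniteSupport_minVal_mul_deg hP).add
    (VS.hasFiniteSupport_minVal_mul_deg hQ)) (VS.hasFiniteSupport_minVal_mul_deg hPQ) fun i => ?_
  rw [← add_mul]
  exact mul_le_mul_of_nonneg_right (minVal_add_minVal_le_minVal_cross hPQ) (Int.natCast_nonneg _)

end Height

theorem exists_smul_eq_cross_of_dotProduct_eq_zero {K : Type*} [Field K] {A P Q : Fin 3 → K}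
    (hA : A ≠ 0) (hPQ : LinearIndependent K ![P, Q]) (hAP : A ⬝ᵥ P = 0) (hAQ : A ⬝ᵥ Q = 0) :
    ∃ μ : K, μ ≠ 0 ∧ μ • A = P ⨯₃ Q := by
  have hcross : P ⨯₃ Q ≠ 0 := crossProduct_ne_zero_iff_linearIndependent.mpr hPQ
  have hA_cross : A ⨯₃ (P ⨯₃ Q) = 0 := by
    rw [cross_cross_eq_smul_sub_smul', hAQ, dotProduct_comm, hAP, zero_smul, zero_smul, sub_zero]
  have hdep : ¬LinearIndependent K ![A, P ⨯₃ Q] :=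
    crossProduct_ne_zero_iff_linearIndependent.not_right.mp hA_cross
  obtain ⟨μ, hμ⟩ : ∃ μ : K, μ • A = P ⨯₃ Q := by
    simpa [LinearIndependent.pair_iff' hA] using hdep
  exact ⟨μ, by rintro rfl; exact hcross (by rw [← hμ, zero_smul]), hμ⟩

theorem Hhom_le_of_linear_relation_general {K : Type*} [Field K] {I : Type*}
    (VS : ValuationSetup K I) (a b c : K) (ha : a ≠ 0)
    (x₁ y₁ z₁ x₂ y₂ z₂ : K)
    (hindep : LinearIndependent K ![![x₁, y₁, z₁], ![x₂, y₂, z₂]])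
    (h₁ : a * x₁ + b * y₁ + c * z₁ = 0) (h₂ : a * x₂ + b * y₂ + c * z₂ = 0) :
    Hhom VS ![a, b, c] ≤ Hhom VS ![x₁, y₁, z₁] + Hhom VS ![x₂, y₂, z₂] := by
  have hA : ![a, b, c] ≠ 0 := fun h => ha (congrFun h 0)
  obtain ⟨μ, hμ, hμA⟩ := exists_smul_eq_cross_of_dotProduct_eq_zero hA hindep
    (by rwa [vec3_dotProduct']) (by rwa [vec3_dotProduct'])
  calc Hhom VS ![a, b, c] = Hhom VS (μ • ![a, b, c]) := (Hhom_smul VS hμ hA).symm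
    _ = Hhom VS (![x₁, y₁, z₁] ⨯₃ ![x₂, y₂, z₂]) := by rw [hμA]
    _ ≤ Hhom VS ![x₁, y₁, z₁] + Hhom VS ![x₂, y₂, z₂] :=
      Hhom_cross_le VS (crossProduct_ne_zero_iff_linearIndependent.mpr hindep)

/-- in the valuation setup, if `a, b, c ≠ 0` and `(xⱼ, yⱼ, zⱼ)`, `j = 1, 2`,
are two `K`-linearly independent vectors with `a·xⱼ + b·yⱼ + c·zⱼ = 0`, then
`H^hom(a,b,c) ≤ H^hom(x₁,y₁,z₁) + H^hom(x₂,y₂,z₂)`. -/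
theorem Hhom_le_of_linear_relation {K : Type*} [Field K] {I : Type*}
    (VS : ValuationSetup K I) (a b c : K) (ha : a ≠ 0) (hb : b ≠ 0) (hc : c ≠ 0)
    (x₁ y₁ z₁ x₂ y₂ z₂ : K)
    (hindep : LinearIndependent K ![![x₁, y₁, z₁], ![x₂, y₂, z₂]])
    (h₁ : a * x₁ + b * y₁ + c * z₁ = 0) (h₂ : a * x₂ + b * y₂ + c * z₂ = 0) :
    Hhom VS ![a, b, c] ≤ Hhom VS ![x₁, y₁, z₁] + Hhom VS ![x₂, y₂, z₂] :=
  Hhom_le_of_linear_relation_general VS a b c ha x₁ y₁ z₁ x₂ y₂ z₂ hindep h₁ h₂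
end

section
/- Let V be a real vector space with a norm ‖·‖, let p be a prime number, let θ ∈ (0, 1/9), and let e ∈ V with ‖e‖ = 1. Let S be a subset of V ∖ {0} such that: (i) every x ∈ S satisfies ‖x/‖x‖ − e‖ ≤ θ; (ii) p·x ∈ S for every x ∈ S; (iii) for any two distinct u, v ∈ S and every positive integer N with N < p/3 − 2, there exists M ∈ {N, N+1} such that ‖u‖ ≤ (2/(M + 1))·‖v − (2M + 1)·u‖. Then for any two distinct u₁, u₂ ∈ S with ‖u₂‖/‖u₁‖ < 2p/3 − 3, one has ‖u₂‖/‖u₁‖ ≤ 10/θ. -/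
private lemma aux_arith2 (θ a m : ℝ) (ha : 0 < a)
    (h : a * (m + 1) ≤ 2 * (2 * a + (2 * m + 1) * a * (2 * θ))) :
    m + 1 ≤ 4 + 4 * θ * (2 * m + 1) := by
  have h' : (m + 1) * a ≤ (4 + 4 * θ * (2 * m + 1)) * a := by nlinarith
  exact le_of_mul_le_mul_right h' ha

private lemma aux_arith1 (θ m r : ℝ) (hθ : 0 < θ) (hθ' : θ < 1 / 9) (h10 : 10 < θ * r)
    (hrm : r < 2 * m + 3) (hm : m + 1 ≤ 4 + 4 * θ * (2 * m + 1)) : False := by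
  have h10' : 10 < θ * (2 * m + 3) := h10.trans (mul_lt_mul_of_pos_left hrm hθ)
  have h1 : 5 - (3/2) * θ < θ * m := by nlinarith
  have h2 : m * (1 - 8 * θ) ≤ 3 + 4 * θ := by nlinarith
  have h8 : (0:ℝ) < 1 - 8 * θ := by linarith
  have h3 := mul_lt_mul_of_pos_right h1 h8
  have h4 : θ * m * (1 - 8 * θ) ≤ θ * (3 + 4 * θ) := by
    nlinarith [mul_le_mul_of_nonneg_left h2 hθ.le]
  nlinarith [sq_nonneg θ]

/-- anti-gap principle: Let `V` be a real normed vector space, `p` a prime,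
`θ ∈ (0, 1/9)`, `e ∈ V` with `‖e‖ = 1`, and let `S ⊆ V ∖ {0}` satisfy: (i) every `x ∈ S`
has `‖x/‖x‖ − e‖ ≤ θ`; (ii) `p·x ∈ S` for every `x ∈ S`; (iii) for distinct `u, v ∈ S` and
every positive integer `N < p/3 − 2` there is `M ∈ {N, N+1}` with
`‖u‖ ≤ (2/(M+1))·‖v − (2M+1)·u‖`. Then any distinct `u₁, u₂ ∈ S` with
`‖u₂‖/‖u₁‖ < 2p/3 − 3` satisfy `‖u₂‖/‖u₁‖ ≤ 10/θ`. -/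
theorem anti_gap_principle {V : Type*} [NormedAddCommGroup V] [NormedSpace ℝ V]
    (p : ℕ) (hp : p.Prime) (θ : ℝ) (hθ : 0 < θ) (hθ' : θ < 1 / 9)
    (e : V) (he : ‖e‖ = 1) (S : Set V) (hS0 : (0 : V) ∉ S)
    (hSe : ∀ x ∈ S, ‖‖x‖⁻¹ • x - e‖ ≤ θ)
    (hSp : ∀ x ∈ S, (p : ℝ) • x ∈ S)
    (hSgap : ∀ u ∈ S, ∀ v ∈ S, u ≠ v → ∀ N : ℕ, 0 < N → (N : ℝ) < p / 3 - 2 →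
      ∃ M : ℕ, (M = N ∨ M = N + 1) ∧ ‖u‖ ≤ 2 / (M + 1) * ‖v - ((2 * M + 1 : ℕ) : ℝ) • u‖) :
    ∀ u₁ ∈ S, ∀ u₂ ∈ S, u₁ ≠ u₂ → ‖u₂‖ / ‖u₁‖ < 2 * p / 3 - 3 → ‖u₂‖ / ‖u₁‖ ≤ 10 / θ := by
  intro u₁ hu₁ u₂ hu₂ hne hlt
  by_contra hcon
  push_neg at hcon
  have hu₁0 : u₁ ≠ 0 := fun h => hS0 (h ▸ hu₁)
  have hu₂0 : u₂ ≠ 0 := fun h => hS0 (h ▸ hu₂)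
  have ha : (0:ℝ) < ‖u₁‖ := norm_pos_iff.mpr hu₁0
  have hb : (0:ℝ) < ‖u₂‖ := norm_pos_iff.mpr hu₂0
  set a := ‖u₁‖ with ha_def
  set b := ‖u₂‖ with hb_def
  set r := b / a with hr_def
  have hba : b = r * a := by rw [hr_def, div_mul_cancel₀ _ ha.ne']
  have h90 : (90:ℝ) < r := by
    have h : (90:ℝ) < 10/θ := by rw [lt_div_iff₀ hθ]; nlinarith
    linarith
  have hθr : 10 < θ * r := by
    rw [div_lt_iff₀ hθ] at hcon; nlinarith
  set N := ⌊(r-1)/2⌋₊ with hN_def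
  have hN1 : (N:ℝ) ≤ (r-1)/2 := Nat.floor_le (by linarith)
  have hN2 : (r-1)/2 < N + 1 := Nat.lt_floor_add_one _
  have hNpos : 0 < N := Nat.floor_pos.mpr (by linarith)
  have hNp : (N:ℝ) < (p:ℝ)/3 - 2 := by linarith
  obtain ⟨M, hM, hineq⟩ := hSgap u₁ hu₁ u₂ hu₂ hne N hNpos hNp
  have hMN1 : (N:ℝ) ≤ (M:ℝ) := by rcases hM with h | h <;> subst h <;> push_cast <;> linarith
  have hMN2 : (M:ℝ) ≤ (N:ℝ) + 1 := by rcases hM with h | h <;> subst h <;> push_cast <;> linarith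
  set lam : ℝ := ((2*M+1 : ℕ):ℝ) with hlam_def
  have hlam : lam = 2*(M:ℝ)+1 := by push_cast [hlam_def]; ring
  have hlampos : 0 < lam := by rw [hlam]; positivity
  clear_value lam N r b a
  rw [← ha_def] at hineq
  -- closeness of lam to r
  have hclose : |b - lam * a| ≤ 2*a := by
    rw [abs_le]
    constructor <;> nlinarith [hN1, hN2, hMN1, hMN2]
  -- direction estimate
  have hxn : ‖a⁻¹ • u₁‖ = 1 := by rw [ha_def]; exact norm_smul_inv_norm hu₁0
  have hyn : ‖b⁻¹ • u₂‖ = 1 := by rw [hb_def]; exact norm_smul_inv_norm hu₂0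
  have hxy : ‖b⁻¹ • u₂ - a⁻¹ • u₁‖ ≤ 2*θ := by
    have h1 := hSe u₁ hu₁
    have h2 := hSe u₂ hu₂
    rw [← ha_def] at h1
    rw [← hb_def] at h2
    calc ‖b⁻¹ • u₂ - a⁻¹ • u₁‖ = ‖(b⁻¹ • u₂ - e) - (a⁻¹ • u₁ - e)‖ := by abel_nf
      _ ≤ ‖b⁻¹ • u₂ - e‖ + ‖a⁻¹ • u₁ - e‖ := norm_sub_le _ _
      _ ≤ θ + θ := add_le_add h2 h1
      _ = 2*θ := by ring
  have key : u₂ - lam • u₁ = (b - lam*a) • (b⁻¹ • u₂) + (lam*a) • (b⁻¹ • u₂ - a⁻¹ • u₁) := by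
    match_scalars <;> field_simp <;> ring
  have hbound : ‖u₂ - lam • u₁‖ ≤ 2*a + lam*a*(2*θ) := by
    rw [key]
    have e1 : ‖(b - lam*a) • (b⁻¹ • u₂)‖ = |b - lam*a| := by
      rw [norm_smul, Real.norm_eq_abs, hyn, mul_one]
    have e2 : ‖(lam*a) • (b⁻¹ • u₂ - a⁻¹ • u₁)‖ = (lam*a) * ‖b⁻¹ • u₂ - a⁻¹ • u₁‖ := by
      rw [norm_smul, Real.norm_eq_abs, abs_of_pos (mul_pos hlampos ha)]
    calc ‖(b - lam*a) • (b⁻¹ • u₂) + (lam*a) • (b⁻¹ • u₂ - a⁻¹ • u₁)‖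
        ≤ ‖(b - lam*a) • (b⁻¹ • u₂)‖ + ‖(lam*a) • (b⁻¹ • u₂ - a⁻¹ • u₁)‖ := norm_add_le _ _
      _ = |b - lam*a| + (lam*a) * ‖b⁻¹ • u₂ - a⁻¹ • u₁‖ := by rw [e1, e2]
      _ ≤ 2*a + lam*a*(2*θ) := by
          have := mul_le_mul_of_nonneg_left hxy (le_of_lt (mul_pos hlampos ha))
          linarith [hclose]
  -- combine
  have hM1 : (0:ℝ) < (M:ℝ) + 1 := by positivity
  have hcomb : (M:ℝ) + 1 ≤ 4 + 4*θ*(2*(M:ℝ)+1) := by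
    have h := hineq.trans (mul_le_mul_of_nonneg_left hbound (by positivity))
    rw [hlam, div_mul_eq_mul_div, le_div_iff₀ hM1] at h
    exact aux_arith2 θ a (M:ℝ) ha h
  -- final contradiction
  have hrm : r < 2*(M:ℝ) + 3 := by linarith
  exact aux_arith1 θ (M:ℝ) r hθ hθ' hθr hrm hcomb
end
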